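/- arXiv:1911.07057 — 9 statements merged into one kernel-verified Lean document; each statement's English description precedes it below -/
import Mathlib

section
/- For points A, B, C, D in a real vector space V, if Sbtw ℝ A B C and Sbtw ℝ B C D, then Sbtw ℝ A B D and Sbtw ℝ A C D. (The second transitivity law for strict betweenness, due to Moore, used in Hilbert's Theorem 5.) -/
/-- Second transitivity law for strict betweenness (Moore). -/
theorem sbtw_trans_second {V : Type*} [AddCommGroup V] [Module ℝ V]
    (A B C D : V) (h₁ : Sbtw ℝ A B C) (h₂ : Sbtw ℝ B C D) :
    Sbtw ℝ A B D ∧ Sbtw ℝ A C D :=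
  ⟨h₁.trans_expand_left h₂, h₁.trans_expand_right h₂⟩
end

section
/- Given any four pairwise distinct collinear points P₀, P₁, P₂, P₃ in a real vector space V (Collinear ℝ {P₀, P₁, P₂, P₃}), it is possible to label them A, B, C, D (i.e., there is a bijection of {P₀, P₁, P₂, P₃} onto labels A, B, C, D) such that Sbtw ℝ A B C, Sbtw ℝ A B D, Sbtw ℝ A C D, and Sbtw ℝ B C D. (This is Hilbert's Theorem 5, verified in the standard real affine model.) -/
/-!
The line through `P₀` and `P₁` is parametrised by the injective affine map `lineMap P₀ P₁ : ℝ → V`,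
and collinearity puts all four points on it. Their parameters are four distinct reals; listing them
in increasing order gives the labelling, because an injective affine map preserves strict
betweenness and on `ℝ` strict betweenness is just `a < b < c`.
-/

open AffineMap

theorem exists_lt_lt_lt_of_pairwise_ne {α : Type*} [LinearOrder α] {x₀ x₁ x₂ x₃ : α}
    (h01 : x₀ ≠ x₁) (h02 : x₀ ≠ x₂) (h03 : x₀ ≠ x₃)
    (h12 : x₁ ≠ x₂) (h13 : x₁ ≠ x₃) (h23 : x₂ ≠ x₃) :
    ∃ a b c d : α, ({a, b, c, d} : Set α) = {x₀, x₁, x₂, x₃} ∧ a < b ∧ b < c ∧ c < d := by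
  set s : Finset α := {x₀, x₁, x₂, x₃}
  have hs : s.card = 4 := by simp [s, Finset.card_insert_of_notMem, *]
  set e := s.orderEmbOfFin hs
  refine ⟨e 0, e 1, e 2, e 3, ?_, e.strictMono (by decide), e.strictMono (by decide),
    e.strictMono (by decide)⟩
  have hrange : Set.range e = {x₀, x₁, x₂, x₃} := by
    simp [e, Finset.range_orderEmbOfFin, s]
  rw [← hrange]
  ext x
  simp [Fin.exists_fin_succ, eq_comm]

theorem Collinear.exists_lineMap_eq {k V P : Type*} [DivisionRing k] [AddCommGroup V] [Module k V]
    [AddTorsor V P] {s : Set P} (h : Collinear k s) {p q : P} (hp : p ∈ s) (hq : q ∈ s)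
    (hpq : p ≠ q) {x : P} (hx : x ∈ s) : ∃ t : k, lineMap p q t = x :=
  mem_affineSpan_pair_iff_exists_lineMap_eq.1 (h.mem_affineSpan_of_mem_of_ne hp hq hx hpq)

theorem exists_sbtw_labelling_of_subset_range {R V P : Type*} [Field R] [LinearOrder R]
    [IsStrictOrderedRing R] [AddCommGroup V] [Module R V] [AddTorsor V P]
    {f : R →ᵃ[R] P} (hf : Function.Injective f) {P₀ P₁ P₂ P₃ : P}
    (h01 : P₀ ≠ P₁) (h02 : P₀ ≠ P₂) (h03 : P₀ ≠ P₃)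
    (h12 : P₁ ≠ P₂) (h13 : P₁ ≠ P₃) (h23 : P₂ ≠ P₃)
    (hrange : {P₀, P₁, P₂, P₃} ⊆ Set.range f) :
    ∃ A B C D : P, ({A, B, C, D} : Set P) = {P₀, P₁, P₂, P₃} ∧
      Sbtw R A B C ∧ Sbtw R A B D ∧ Sbtw R A C D ∧ Sbtw R B C D := by
  obtain ⟨t₀, rfl⟩ := hrange (by simp : P₀ ∈ _)
  obtain ⟨t₁, rfl⟩ := hrange (by simp : P₁ ∈ _)
  obtain ⟨t₂, rfl⟩ := hrange (by simp : P₂ ∈ _)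
  obtain ⟨t₃, rfl⟩ := hrange (by simp : P₃ ∈ _)
  obtain ⟨a, b, c, d, hset, hab, hbc, hcd⟩ := exists_lt_lt_lt_of_pairwise_ne
    (ne_of_apply_ne f h01) (ne_of_apply_ne f h02) (ne_of_apply_ne f h03)
    (ne_of_apply_ne f h12) (ne_of_apply_ne f h13) (ne_of_apply_ne f h23)
  have hsbtw {x y z : R} (hxy : x < y) (hyz : y < z) : Sbtw R (f x) (f y) (f z) :=
    hf.sbtw_map_iff.2 (.of_lt_of_lt hxy hyz)
  refine ⟨f a, f b, f c, f d, ?_, hsbtw hab hbc, hsbtw hab (hbc.trans hcd),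
    hsbtw (hab.trans hbc) hcd, hsbtw hbc hcd⟩
  simpa [Set.image_insert_eq] using congrArg (f '' ·) hset

/-- Hilbert's Theorem 5 (in the real affine model): any four pairwise distinct
collinear points may be labelled `A`, `B`, `C`, `D` so that `B` lies between
`A` and `C` and between `A` and `D`, and `C` lies between `A` and `D` and
between `B` and `D`. -/
theorem hilbert_theorem_5 {V : Type*} [AddCommGroup V] [Module ℝ V]
    (P₀ P₁ P₂ P₃ : V)
    (h01 : P₀ ≠ P₁) (h02 : P₀ ≠ P₂) (h03 : P₀ ≠ P₃)
    (h12 : P₁ ≠ P₂) (h13 : P₁ ≠ P₃) (h23 : P₂ ≠ P₃)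
    (hcol : Collinear ℝ ({P₀, P₁, P₂, P₃} : Set V)) :
    ∃ A B C D : V, ({A, B, C, D} : Set V) = {P₀, P₁, P₂, P₃} ∧
      Sbtw ℝ A B C ∧ Sbtw ℝ A B D ∧ Sbtw ℝ A C D ∧ Sbtw ℝ B C D :=
  exists_sbtw_labelling_of_subset_range (lineMap_injective ℝ h01) h01 h02 h03 h12 h13 h23
    fun _ hx => Collinear.exists_lineMap_eq hcol (by simp) (by simp) h01 hx
end

section
/- Let p : Fin n → V be an injective family of collinear points in a real vector space V (Collinear ℝ (Set.range p)). Then there exists a permutation σ of Fin n such that for all indices i < j < k, the point p (σ j) lies strictly between p (σ i) and p (σ k), i.e., Sbtw ℝ (p (σ i)) (p (σ j)) (p (σ k)). (Existence half of Hilbert's Theorem 6: any finite set of points on a line can be labeled in order.) -/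
/-!
Collinear points are the image of real parameters under an affine map `ℓ : ℝ →ᵃ[ℝ] V`; injectivity
of the family makes the parameters distinct, and sorting them gives the labelling. Affine maps
preserve weak betweenness, and distinctness of the points upgrades it to strict betweenness.
-/

open AffineMap

theorem Collinear.exists_affineMap_comp_eq {k V P ι : Type*} [DivisionRing k] [AddCommGroup V]
    [Module k V] [AddTorsor V P] {p : ι → P} (h : Collinear k (Set.range p)) :
    ∃ (ℓ : k →ᵃ[k] P) (t : ι → k), ℓ ∘ t = p := by
  obtain ⟨p₀, v, hv⟩ := (collinear_iff_exists_forall_eq_smul_vadd _).1 h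
  choose t ht using fun i => hv (p i) (Set.mem_range_self i)
  refine ⟨lineMap p₀ (v +ᵥ p₀), t, funext fun i => ?_⟩
  simp [lineMap_apply, ht i]

theorem AffineMap.sbtw_of_lt_of_lt {k V P : Type*} [Field k] [LinearOrder k]
    [IsStrictOrderedRing k] [AddCommGroup V] [Module k V] [AddTorsor V P] (ℓ : k →ᵃ[k] P)
    {a b c : k} (hab : a < b) (hbc : b < c) (hba : ℓ b ≠ ℓ a) (hbc' : ℓ b ≠ ℓ c) :
    Sbtw k (ℓ a) (ℓ b) (ℓ c) :=
  ⟨(Sbtw.of_lt_of_lt hab hbc).wbtw.map ℓ, hba, hbc'⟩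

/-- Existence half of Hilbert's Theorem 6 (in the real affine model): any injective
finite family of collinear points can be relabelled by a permutation so that the
labels occur in betweenness order. -/
theorem hilbert_theorem_6_exists {V : Type*} [AddCommGroup V] [Module ℝ V]
    {n : ℕ} (p : Fin n → V) (hp : Function.Injective p)
    (hcol : Collinear ℝ (Set.range p)) :
    ∃ σ : Equiv.Perm (Fin n), ∀ i j k : Fin n, i < j → j < k →
      Sbtw ℝ (p (σ i)) (p (σ j)) (p (σ k)) := by
  obtain ⟨ℓ, t, rfl⟩ := hcol.exists_affineMap_comp_eq
  have hsorted : StrictMono (t ∘ Tuple.sort t) :=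
    (Tuple.monotone_sort t).strictMono_of_injective
      (hp.of_comp.comp (Tuple.sort t).injective)
  have hinj : Function.Injective (ℓ ∘ t ∘ Tuple.sort t) := hp.comp (Tuple.sort t).injective
  exact ⟨Tuple.sort t, fun i j k hij hjk =>
    ℓ.sbtw_of_lt_of_lt (hsorted hij) (hsorted hjk) (hinj.ne hij.ne') (hinj.ne hjk.ne)⟩
end

section
/- Let p : Fin n → V be an injective family of collinear points in a real vector space V, and suppose σ and τ are both permutations of Fin n such that for all i < j < k one has Sbtw ℝ (p (σ i)) (p (σ j)) (p (σ k)) and Sbtw ℝ (p (τ i)) (p (τ j)) (p (τ k)). Then either τ = σ or τ i = σ (Fin.rev i) for all i, i.e., τ is the reversal of σ. (Uniqueness half of Hilbert's Theorem 6: besides a given ordering, only the reverse ordering has the betweenness property.) -/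
/-! A point strictly between two others of the family can only come from an index strictly
between theirs, so `σ⁻¹ ∘ τ` maps index triples `i < j < k` to triples in which the middle index
stays in the middle. Such a map between linear orders is strictly monotone or strictly antitone,
and on `Fin n` the only strictly monotone (antitone) permutation is the identity (the reversal). -/

theorem sbtw_iff_of_forall_sbtw {R V P ι : Type*} [Ring R] [PartialOrder R] [IsOrderedRing R]
    [IsDomain R] [AddCommGroup V] [Module R V] [Module.IsTorsionFree R V] [AddTorsor V P]
    [LinearOrder ι] {q : ι → P}
    (hq : ∀ i j k : ι, i < j → j < k → Sbtw R (q i) (q j) (q k)) {a b c : ι} :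
    Sbtw R (q a) (q b) (q c) ↔ (a < b ∧ b < c) ∨ (c < b ∧ b < a) := by
  refine ⟨fun h => ?_, ?_⟩
  · have hab : a ≠ b := fun e => h.left_ne (congrArg q e)
    have hbc : b ≠ c := fun e => h.ne_right (congrArg q e)
    have hac : a ≠ c := fun e => h.left_ne_right (congrArg q e)
    rcases hab.lt_or_gt with hab | hab <;> rcases hbc.lt_or_gt with hbc | hbc
    · exact Or.inl ⟨hab, hbc⟩
    · rcases hac.lt_or_gt with hac | hac
      · exact absurd (hq a c b hac hbc).wbtw h.not_swap_right
      · exact absurd (hq c a b hac hab).wbtw h.not_rotate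
    · rcases hac.lt_or_gt with hac | hac
      · exact absurd (hq b a c hab hac).wbtw h.not_swap_left
      · exact absurd (hq b c a hbc hac).wbtw.symm h.not_swap_right
    · exact Or.inr ⟨hbc, hab⟩
  · rintro (⟨hab, hbc⟩ | ⟨hcb, hba⟩)
    · exact hq a b c hab hbc
    · exact (hq c b a hcb hba).symm

def PreservesBetween {α β : Type*} [LinearOrder α] [LinearOrder β] (f : α → β) : Prop :=
  ∀ ⦃i j k : α⦄, i < j → j < k → (f i < f j ∧ f j < f k) ∨ (f k < f j ∧ f j < f i)

namespace PreservesBetween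

variable {α β : Type*} [LinearOrder α] [LinearOrder β] {f : α → β}

theorem lt_iff_of_le_of_le (hf : PreservesBetween f) {m x y M : α}
    (hmx : m ≤ x) (hxy : x < y) (hyM : y ≤ M) : f x < f y ↔ f m < f M := by
  have widen_left : f x < f y ↔ f m < f y := by
    rcases hmx.eq_or_lt with rfl | hmx
    · rfl
    · rcases hf hmx hxy with ⟨h₁, h₂⟩ | ⟨h₁, h₂⟩
      · exact iff_of_true h₂ (h₁.trans h₂)
      · exact iff_of_false h₁.asymm (h₁.trans h₂).asymm
  have widen_right : f m < f y ↔ f m < f M := by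
    rcases hyM.eq_or_lt with rfl | hyM
    · rfl
    · rcases hf (hmx.trans_lt hxy) hyM with ⟨h₁, h₂⟩ | ⟨h₁, h₂⟩
      · exact iff_of_true h₁ (h₁.trans h₂)
      · exact iff_of_false h₂.asymm (h₁.trans h₂).asymm
  exact widen_left.trans widen_right

theorem strictMono_or_strictAnti (hf : PreservesBetween f) (hinj : Function.Injective f) :
    StrictMono f ∨ StrictAnti f := by
  by_cases! hup : ∃ a b, a < b ∧ f a < f b
  · obtain ⟨a, b, hab, hfab⟩ := hup
    refine Or.inl fun x y hxy => ?_
    rwa [hf.lt_iff_of_le_of_le (min_le_left x a) hxy (le_max_left y b),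
      ← hf.lt_iff_of_le_of_le (min_le_right x a) hab (le_max_right y b)]
  · exact Or.inr fun a b hab => (hup a b hab).lt_of_ne (hinj.ne hab.ne')

end PreservesBetween

theorem Fin.eq_rev_of_strictAnti {n : ℕ} {f : Fin n → Fin n} (hf : StrictAnti f) (i : Fin n) :
    f i = Fin.rev i :=
  Fin.rev_eq_iff.mp (Fin.rev_strictAnti.comp hf).apply_eq

theorem hilbert_theorem_6_unique_general {V : Type*} [AddCommGroup V] [Module ℝ V]
    {n : ℕ} (p : Fin n → V)
    (σ τ : Equiv.Perm (Fin n))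
    (hσ : ∀ i j k : Fin n, i < j → j < k → Sbtw ℝ (p (σ i)) (p (σ j)) (p (σ k)))
    (hτ : ∀ i j k : Fin n, i < j → j < k → Sbtw ℝ (p (τ i)) (p (τ j)) (p (τ k))) :
    τ = σ ∨ ∀ i : Fin n, τ i = σ (Fin.rev i) := by
  set f : Equiv.Perm (Fin n) := σ.symm * τ
  have hτf : ∀ i, τ i = σ (f i) := fun i => by simp [f]
  have hf : PreservesBetween f := fun i j k hij hjk =>
    (sbtw_iff_of_forall_sbtw (q := p ∘ σ) hσ).mp <| by
      simpa only [hτf, Function.comp_apply] using hτ i j k hij hjk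
  rcases hf.strictMono_or_strictAnti f.injective with hmono | hanti
  · exact Or.inl <| Equiv.ext fun i => by rw [hτf, hmono.apply_eq]
  · exact Or.inr fun i => by rw [hτf, Fin.eq_rev_of_strictAnti hanti]

/-- Uniqueness half of Hilbert's Theorem 6 (in the real affine model): besides a given
ordering of an injective collinear family, only the reverse ordering has the
betweenness property. -/
theorem hilbert_theorem_6_unique {V : Type*} [AddCommGroup V] [Module ℝ V]
    {n : ℕ} (p : Fin n → V) (hp : Function.Injective p)
    (hcol : Collinear ℝ (Set.range p))
    (σ τ : Equiv.Perm (Fin n))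
    (hσ : ∀ i j k : Fin n, i < j → j < k → Sbtw ℝ (p (σ i)) (p (σ j)) (p (σ k)))
    (hτ : ∀ i j k : Fin n, i < j → j < k → Sbtw ℝ (p (τ i)) (p (τ j)) (p (τ k))) :
    τ = σ ∨ ∀ i : Fin n, τ i = σ (Fin.rev i) :=
  hilbert_theorem_6_unique_general p σ τ hσ hτ
end

section
/- Pasch's axiom holds in the real affine model: let A, B, C be three non-collinear points in a real vector space V (¬ Collinear ℝ {A, B, C}), and let L be a line (an affine subspace of V whose direction has rank 1) contained in the affine span of {A, B, C}, with A ∉ L, B ∉ L, C ∉ L. If there exists a point X ∈ L with Sbtw ℝ A X B, then there exists a point Y ∈ L with Sbtw ℝ A Y C or Sbtw ℝ B Y C. -/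
/-!
The line `L` and the vertex `A` span the plane of the triangle (by a dimension count), so every
point of that plane off `L` lies strictly on one of the two sides of `L`. The vertices `A` and `B`
are on opposite sides, since `X ∈ L` lies strictly between them; hence `C` is on the opposite
side from `A` or from `B`, and the segment joining those two points crosses `L`.
-/

open Module

namespace AffineSubspace

variable {k V P : Type*}

theorem affineSpan_insert_eq_of_finrank_le [DivisionRing k] [AddCommGroup V] [Module k V]
    [AddTorsor V P] {s t : AffineSubspace k P} [FiniteDimensional k t.direction] (hst : s ≤ t)
    (hs : (s : Set P).Nonempty) {p : P} (hpt : p ∈ t) (hps : p ∉ s)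
    (hfinrank : finrank k t.direction ≤ finrank k s.direction + 1) :
    affineSpan k (insert p (s : Set P)) = t := by
  set S := affineSpan k (insert p (s : Set P))
  have hSt : S ≤ t := affineSpan_le.2 (Set.insert_subset hpt hst)
  have hsS : s < S :=
    lt_of_le_of_ne ((Set.subset_insert _ _).trans (subset_affineSpan k _))
      fun h => hps (h ▸ mem_affineSpan k (Set.mem_insert p _))
  have : FiniteDimensional k S.direction := Submodule.finiteDimensional_of_le (direction_le hSt)
  have hlt := Submodule.finrank_lt_finrank_of_lt (direction_lt_of_nonempty hsS hs)
  refine eq_of_direction_eq_of_nonempty_of_le ?_ (hs.mono hsS.le) hSt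
  exact Submodule.eq_of_le_of_finrank_le (direction_le hSt) (by omega)

theorem sSameSide_or_sOppSide_of_mem_affineSpan_insert [Field k] [LinearOrder k]
    [IsStrictOrderedRing k] [AddCommGroup V] [Module k V] [AddTorsor V P]
    {s : AffineSubspace k P} {x y p : P} (hp : p ∈ s) (hx : x ∉ s) (hy : y ∉ s)
    (hxy : y ∈ affineSpan k (insert x (s : Set P))) : s.SSameSide x y ∨ s.SOppSide x y := by
  obtain ⟨r, q, hq, rfl⟩ := (mem_affineSpan_insert_iff hp x y).1 hxy
  have hx' : x -ᵥ p = (1 : k) • (x -ᵥ p) := (one_smul k _).symm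
  have hy' : (r • (x -ᵥ p) +ᵥ q) -ᵥ q = r • (x -ᵥ p) := vadd_vsub _ _
  rcases le_total 0 r with hr | hr
  · exact .inl (sSameSide_of_vsub_eq_smul hp hq hx' hy' (by simpa using hr) hx hy)
  · exact .inr (sOppSide_of_vsub_eq_smul hp hq hx' hy' (by simpa using hr) hx hy)

end AffineSubspace

open AffineSubspace in
theorem pasch_axiom_general {V : Type*} [AddCommGroup V] [Module ℝ V]
    (A B C : V)
    (L : AffineSubspace ℝ V) (hrank : Module.rank ℝ L.direction = 1)
    (hLplane : L ≤ affineSpan ℝ ({A, B, C} : Set V))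
    (hA : A ∉ L) (hC : C ∉ L)
    (hX : ∃ X ∈ L, Sbtw ℝ A X B) :
    ∃ Y ∈ L, Sbtw ℝ A Y C ∨ Sbtw ℝ B Y C := by
  obtain ⟨X, hXL, hAXB⟩ := hX
  have hAB : L.SOppSide A B := hAXB.sOppSide_of_notMem_of_mem hA hXL
  have hplane : finrank ℝ (affineSpan ℝ ({A, B, C} : Set V)).direction ≤ 2 := by
    rw [direction_affineSpan, ← coplanar_iff_finrank_le_two]
    exact coplanar_triple ℝ A B C
  have hspan : affineSpan ℝ (insert A (L : Set V)) = affineSpan ℝ {A, B, C} :=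
    affineSpan_insert_eq_of_finrank_le hLplane ⟨X, hXL⟩ (mem_affineSpan ℝ (by simp)) hA
      (by rwa [rank_eq_one_iff_finrank_eq_one.1 hrank])
  rcases sSameSide_or_sOppSide_of_mem_affineSpan_insert hXL hA hC
    (hspan ▸ mem_affineSpan ℝ (by simp)) with hAC | hAC
  · obtain ⟨Y, hYL, hBYC⟩ := (sSameSide_comm.1 hAC).trans_sOppSide hAB |>.exists_sbtw
    exact ⟨Y, hYL, .inr hBYC.symm⟩
  · obtain ⟨Y, hYL, hAYC⟩ := hAC.exists_sbtw
    exact ⟨Y, hYL, .inl hAYC⟩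

/-- Pasch's axiom (Hilbert's Axiom II,4) holds in the real affine model: if a line `L`
lying in the plane of a triangle `A B C`, and avoiding its vertices, meets the segment
`AB` in an interior point, then it meets the interior of segment `AC` or of segment
`BC`. -/
theorem pasch_axiom {V : Type*} [AddCommGroup V] [Module ℝ V]
    (A B C : V) (hncol : ¬ Collinear ℝ ({A, B, C} : Set V))
    (L : AffineSubspace ℝ V) (hrank : Module.rank ℝ L.direction = 1)
    (hLplane : L ≤ affineSpan ℝ ({A, B, C} : Set V))
    (hA : A ∉ L) (hB : B ∉ L) (hC : C ∉ L)
    (hX : ∃ X ∈ L, Sbtw ℝ A X B) :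
    ∃ Y ∈ L, Sbtw ℝ A Y C ∨ Sbtw ℝ B Y C :=
  pasch_axiom_general A B C L hrank hLplane hA hC hX
end

section
/- Let A, C, O be non-collinear points in a real vector space V (¬ Collinear ℝ {A, C, O}), let B satisfy Sbtw ℝ A B C, and let D' satisfy Sbtw ℝ C O D'. Then there exists a point S with Sbtw ℝ A S O and Collinear ℝ {B, D', S}. (The key step in the successor construction: applying Pasch's axiom to triangle ACO and the line BD' locates a point S strictly between A and O.) -/
/-!
Write `B = A + t (C - A)` and `O = C + s (D' - C)` with `t, s ∈ (0, 1)`, and put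
`d = t s + (1 - s)`, a positive convex combination of `t` and `1`. Then the point
`A + (t / d) (O - A)` equals `B + (t s / d) (D' - B)`, so it lies on the line `B D'`,
and since `0 < t < d` it lies strictly between `A` and `O`.
-/

open AffineMap

theorem lineMap_lineMap_right_eq_lineMap_lineMap_left {k V : Type*} [Field k] [AddCommGroup V]
    [Module k V] (A C D : V) {t s : k} (hs : s ≠ 0) (hd : t * s + 1 - s ≠ 0) :
    lineMap A (lineMap C D s) (t / (t * s + 1 - s)) =
      lineMap (lineMap A C t) D (t * s / (t * s + 1 - s)) := by
  simp only [lineMap_apply_module]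
  match_scalars <;> field_simp <;> ring

theorem exists_sbtw_collinear_of_sbtw_of_sbtw {k V : Type*} [Field k] [LinearOrder k]
    [IsStrictOrderedRing k] [AddCommGroup V] [Module k V] {A B C O D : V} (hAO : A ≠ O)
    (hB : Sbtw k A B C) (hD : Sbtw k C O D) :
    ∃ S : V, Sbtw k A S O ∧ Collinear k ({B, D, S} : Set V) := by
  obtain ⟨t, ⟨ht₀, ht₁⟩, rfl⟩ := hB.mem_image_Ioo
  obtain ⟨s, ⟨hs₀, hs₁⟩, rfl⟩ := hD.mem_image_Ioo
  have hd : 0 < t * s + 1 - s := by nlinarith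
  refine ⟨lineMap A (lineMap C D s) (t / (t * s + 1 - s)), ?_, ?_⟩
  · refine sbtw_lineMap_iff.mpr ⟨hAO, div_pos ht₀ hd, (div_lt_one hd).mpr ?_⟩
    nlinarith
  · rw [lineMap_lineMap_right_eq_lineMap_lineMap_left A C D hs₀.ne' hd.ne']
    exact collinear_triple_of_mem_affineSpan_pair (left_mem_affineSpan_pair _ _ _)
      (right_mem_affineSpan_pair _ _ _) (lineMap_mem_affineSpan_pair _ _ _)

/-- Key step of the successor construction: applying Pasch's axiom to triangle `A C O`
and the line through `B` and `D'`, we locate a point `S` strictly between `A` and `O`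
lying on the line `B D'`. -/
theorem successor_key_step {V : Type*} [AddCommGroup V] [Module ℝ V]
    (A C O B D' : V) (hncol : ¬ Collinear ℝ ({A, C, O} : Set V))
    (hB : Sbtw ℝ A B C) (hD' : Sbtw ℝ C O D') :
    ∃ S : V, Sbtw ℝ A S O ∧ Collinear ℝ ({B, D', S} : Set V) :=
  exists_sbtw_collinear_of_sbtw_of_sbtw (ne₁₃_of_not_collinear hncol) hB hD'
end

section
/- Let A, O, D be non-collinear points in a real vector space V (¬ Collinear ℝ {A, O, D}), let N satisfy Sbtw ℝ A N O, and let C satisfy Sbtw ℝ C O D. Then there exists a point D' with Sbtw ℝ A D' D and Collinear ℝ {C, N, D'}. (The second step in the successor construction: applying Pasch's axiom to triangle AOD and the line through C and N places the point D' strictly between A and D.) -/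
/-!
Write `O = (1 - s) C + s D` and `N = (1 - t) A + t O` with `s, t ∈ (0, 1)`. Then
`N = (1 - t) A + t (1 - s) C + t s D`, and regrouping the `A` and `D` terms exhibits `N` as a
point of the segment from `C` to `D' = ((1 - t) A + t s D) / (1 - t (1 - s))`, which lies
strictly between `A` and `D`.
-/

open AffineMap

section Pasch

variable {k V : Type*} [Field k] [AddCommGroup V] [Module k V]

theorem lineMap_lineMap_eq_lineMap_lineMap (A C D : V) {s t : k} (h : 1 - t * (1 - s) ≠ 0) :
    lineMap A (lineMap C D s) t =
      lineMap C (lineMap A D (t * s / (1 - t * (1 - s)))) (1 - t * (1 - s)) := by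
  simp only [lineMap_apply_module']
  match_scalars <;> field_simp <;> ring

theorem exists_sbtw_wbtw_of_sbtw_of_sbtw [LinearOrder k] [IsStrictOrderedRing k]
    {A N O C D : V} (hAD : A ≠ D) (hN : Sbtw k A N O) (hC : Sbtw k C O D) :
    ∃ D' : V, Sbtw k A D' D ∧ Wbtw k C N D' := by
  obtain ⟨t, ⟨ht₀, ht₁⟩, rfl⟩ := hN.mem_image_Ioo
  obtain ⟨s, ⟨hs₀, hs₁⟩, rfl⟩ := hC.mem_image_Ioo
  have hden : 0 < 1 - t * (1 - s) := by nlinarith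
  refine ⟨lineMap A D (t * s / (1 - t * (1 - s))), sbtw_lineMap_iff.2 ⟨hAD, ?_, ?_⟩, ?_⟩
  · exact div_pos (mul_pos ht₀ hs₀) hden
  · rw [div_lt_one hden]
    nlinarith
  · rw [lineMap_lineMap_eq_lineMap_lineMap A C D hden.ne']
    exact ⟨_, ⟨hden.le, by nlinarith⟩, rfl⟩

end Pasch

/-- Second step of the successor construction: applying Pasch's axiom to triangle
`A O D` and the line through `C` and `N`, we place a point `D'` strictly between
`A` and `D` lying on the line `C N`. -/
theorem successor_second_step {V : Type*} [AddCommGroup V] [Module ℝ V]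
    (A O D N C : V) (hncol : ¬ Collinear ℝ ({A, O, D} : Set V))
    (hN : Sbtw ℝ A N O) (hC : Sbtw ℝ C O D) :
    ∃ D' : V, Sbtw ℝ A D' D ∧ Collinear ℝ ({C, N, D'} : Set V) := by
  obtain ⟨D', hAD'D, hCND'⟩ :=
    exists_sbtw_wbtw_of_sbtw_of_sbtw (ne₁₃_of_not_collinear hncol) hN hC
  exact ⟨D', hAD'D, hCND'.collinear⟩
end

section
/- Existence and closure of the geometric successor: let A, B, C, D, O, N be points in a real vector space V forming a 'diagram', i.e., ¬ Collinear ℝ {A, B, O}, Sbtw ℝ A B C, Sbtw ℝ C O D, and (Sbtw ℝ A N O ∨ N = O). Then there exist points S and D' such that Collinear ℝ {C, D', N}, Collinear ℝ {B, D', S}, Collinear ℝ {A, D, D'}, Sbtw ℝ A S O, and Sbtw ℝ A S N (where for N = O the last condition coincides with Sbtw ℝ A S O). In particular the points A, B, C, D, O, S again form a diagram. -/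
/-!
Write `B = A + b (C - A)`, `O = C + o (D - C)` and `N = A + ν (O - A)` with `b, o ∈ (0, 1)` and
`ν ∈ (0, 1]`. The line `CN` meets `AD` at `D' = A + (oν / E) (D - A)`, where `E = 1 - ν (1 - o) > 0`,
and the line `BD'` meets `AN` at `S = A + (b / Δ) (N - A)`, where `Δ = b E + ν (1 - o)`.
Since `Δ - b = ν (1 - o) (1 - b) > 0`, the point `S` lies strictly between `A` and `N`, hence
strictly between `A` and `O`.
-/

open AffineMap Set

theorem collinear_lineMap {k V P : Type*} [DivisionRing k] [AddCommGroup V] [Module k V]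
    [AddTorsor V P] (p q : P) (t : k) : Collinear k ({p, q, lineMap p q t} : Set P) := by
  have := collinear_insert_of_mem_affineSpan_pair (lineMap_mem_affineSpan_pair t p q)
  rwa [Set.insert_comm, Set.pair_comm] at this

theorem exists_lineMap_eq_of_sbtw_or_eq {R V P : Type*} [Ring R] [PartialOrder R]
    [IsOrderedRing R] [Nontrivial R] [AddCommGroup V] [Module R V] [AddTorsor V P] {x y z : P}
    (h : Sbtw R x y z ∨ y = z) : ∃ t ∈ Ioc (0 : R) 1, lineMap x z t = y := by
  rcases h with h | rfl
  · obtain ⟨t, ⟨ht₀, ht₁⟩, hy⟩ := h.mem_image_Ioo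
    exact ⟨t, ⟨ht₀, ht₁.le⟩, hy⟩
  · exact ⟨1, ⟨zero_lt_one, le_rfl⟩, lineMap_apply_one x y⟩

section
variable {V : Type*} [AddCommGroup V] [Module ℝ V]

theorem lineMap_inv_eq_lineMap {A C D O N : V} {o ν E : ℝ} (hO : lineMap C D o = O)
    (hN : lineMap A O ν = N) (hE : E = 1 - ν * (1 - o)) (hE₀ : E ≠ 0) :
    lineMap C N E⁻¹ = lineMap A D (o * ν / E) := by
  subst hO hN hE
  simp only [lineMap_apply_module]
  match_scalars <;> field_simp <;> ring

theorem lineMap_div_eq_lineMap {A B C D O N : V} {b o ν E Δ : ℝ} (hB : lineMap A C b = B)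
    (hO : lineMap C D o = O) (hN : lineMap A O ν = N) (hΔ : Δ = b * E + ν * (1 - o))
    (hE₀ : E ≠ 0) (hΔ₀ : Δ ≠ 0) :
    lineMap B (lineMap A D (o * ν / E)) (b * E / Δ) = lineMap A N (b / Δ) := by
  subst hB hO hN hΔ
  simp only [lineMap_apply_module]
  match_scalars <;> field_simp <;> ring

end

/-- Existence and closure of the geometric successor: given a diagram
`A B C D O N` (with `¬ Collinear ℝ {A, B, O}`, `Sbtw ℝ A B C`, `Sbtw ℝ C O D`,
and `Sbtw ℝ A N O ∨ N = O`), there exist points `S` and `D'` witnessing the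
successor construction; in particular `A B C D O S` is again a diagram. -/
theorem successor_exists {V : Type*} [AddCommGroup V] [Module ℝ V]
    (A B C D O N : V)
    (hncol : ¬ Collinear ℝ ({A, B, O} : Set V))
    (hB : Sbtw ℝ A B C) (hO : Sbtw ℝ C O D)
    (hN : Sbtw ℝ A N O ∨ N = O) :
    ∃ S D' : V,
      Collinear ℝ ({C, D', N} : Set V) ∧
      Collinear ℝ ({B, D', S} : Set V) ∧
      Collinear ℝ ({A, D, D'} : Set V) ∧
      Sbtw ℝ A S O ∧ Sbtw ℝ A S N := by
  have hAO : A ≠ O := ne₁₃_of_not_collinear hncol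
  obtain ⟨ν, ⟨hν₀, hν₁⟩, hN⟩ := exists_lineMap_eq_of_sbtw_or_eq hN
  obtain ⟨b, ⟨hb₀, hb₁⟩, hB⟩ := hB.mem_image_Ioo
  obtain ⟨o, ⟨ho₀, ho₁⟩, hO⟩ := hO.mem_image_Ioo
  set E := 1 - ν * (1 - o) with hE
  set Δ := b * E + ν * (1 - o) with hΔ
  have hE₀ : 0 < E := by nlinarith
  have hbΔ : b < Δ := by nlinarith [mul_pos (mul_pos hν₀ (sub_pos.2 ho₁)) (sub_pos.2 hb₁)]
  have hΔ₀ : 0 < Δ := hb₀.trans hbΔ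
  have hAN : A ≠ N := by
    rw [← hN]
    exact fun h ↦ (lineMap_eq_left_iff.1 h.symm).elim hAO hν₀.ne'
  have hSN : Sbtw ℝ A (lineMap A N (b / Δ)) N :=
    sbtw_lineMap_iff.2 ⟨hAN, div_pos hb₀ hΔ₀, (div_lt_one hΔ₀).2 hbΔ⟩
  refine ⟨lineMap A N (b / Δ), lineMap A D (o * ν / E), ?_, ?_, collinear_lineMap A D _, ?_, hSN⟩
  · rw [← lineMap_inv_eq_lineMap hO hN hE hE₀.ne', Set.pair_comm]
    exact collinear_lineMap C N _
  · rw [← lineMap_div_eq_lineMap hB hO hN hΔ hE₀.ne' hΔ₀.ne']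
    exact collinear_lineMap _ _ _
  · exact (hN ▸ wbtw_lineMap_iff.2 (Or.inr ⟨hν₀.le, hν₁⟩)).trans_sbtw_left hSN
end

section
/- Uniqueness of the geometric successor: let A, B, C, D, O, N be points in a real vector space V forming a diagram, i.e., ¬ Collinear ℝ {A, B, O}, Sbtw ℝ A B C, Sbtw ℝ C O D, and (Sbtw ℝ A N O ∨ N = O). Suppose S₁, D₁' and S₂, D₂' both satisfy: Collinear ℝ {C, Dᵢ', N}, Collinear ℝ {B, Dᵢ', Sᵢ}, Collinear ℝ {A, D, Dᵢ'}, Sbtw ℝ A Sᵢ O, and Sbtw ℝ A Sᵢ N (for i = 1, 2). Then S₁ = S₂. -/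
/-!
`D'` lies on the lines `AD` and `CN`, and `S` on the lines `BD'` and `AO`. Two lines meet in at
most one point unless they coincide, and the non-collinearity of `A, B, O` propagates along the
diagram to show that neither pair of lines coincides, and that `C ≠ N` and `B ≠ D'`.
-/

section

variable {k V P : Type*} [DivisionRing k] [AddCommGroup V] [Module k V] [AddTorsor V P]

theorem eq_of_mem_line_of_mem_line {a b c d p q : P} (habc : ¬ Collinear k {a, b, c})
    (hp : p ∈ line[k, a, b]) (hq : q ∈ line[k, a, b])
    (hp' : p ∈ line[k, c, d]) (hq' : q ∈ line[k, c, d]) : p = q := by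
  by_contra hpq
  have hpqab : Collinear k {p, q, a, b} := collinear_insert_insert_of_mem_affineSpan_pair hp hq
  have hpqcd : Collinear k {p, q, c, d} := collinear_insert_insert_of_mem_affineSpan_pair hp' hq'
  exact habc <| collinear_triple_of_mem_affineSpan_pair
    (hpqab.mem_affineSpan_of_mem_of_ne (by simp) (by simp) (by simp) hpq)
    (hpqab.mem_affineSpan_of_mem_of_ne (by simp) (by simp) (by simp) hpq)
    (hpqcd.mem_affineSpan_of_mem_of_ne (by simp) (by simp) (by simp) hpq)

theorem not_collinear_of_mem_line {x y z p : P} (hp : p ∈ line[k, x, y])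
    (hxpz : ¬ Collinear k {x, p, z}) : ¬ Collinear k {x, y, z} := by
  intro hxyz
  have hspan : p ∈ affineSpan k {x, y, z} :=
    affineSpan_mono k (by simp [Set.insert_subset_iff]) hp
  exact hxpz (((collinear_insert_iff_of_mem_affineSpan hspan).2 hxyz).subset
    (by simp [Set.insert_subset_iff]))

end

theorem successor_unique_general {V : Type*} [AddCommGroup V] [Module ℝ V]
    (A B C D O N : V)
    (hncol : ¬ Collinear ℝ ({A, B, O} : Set V))
    (hB : Sbtw ℝ A B C) (hO : Sbtw ℝ C O D)
    (hN : Sbtw ℝ A N O ∨ N = O)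
    (S₁ S₂ D₁' D₂' : V)
    (h₁col₁ : Collinear ℝ ({C, D₁', N} : Set V))
    (h₁col₂ : Collinear ℝ ({B, D₁', S₁} : Set V))
    (h₁col₃ : Collinear ℝ ({A, D, D₁'} : Set V))
    (h₁btw₁ : Sbtw ℝ A S₁ O)
    (h₂col₁ : Collinear ℝ ({C, D₂', N} : Set V))
    (h₂col₂ : Collinear ℝ ({B, D₂', S₂} : Set V))
    (h₂col₃ : Collinear ℝ ({A, D, D₂'} : Set V))
    (h₂btw₁ : Sbtw ℝ A S₂ O) :
    S₁ = S₂ := by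
  have hACO : ¬ Collinear ℝ {A, C, O} := not_collinear_of_mem_line hB.wbtw.mem_affineSpan hncol
  have hADC : ¬ Collinear ℝ {A, D, C} := by
    have hCDA : ¬ Collinear ℝ {C, D, A} := not_collinear_of_mem_line hO.wbtw.mem_affineSpan
      (by rwa [Set.insert_comm, Set.pair_comm] at hACO)
    rwa [Set.pair_comm, Set.insert_comm, Set.pair_comm] at hCDA
  have hABD : ¬ Collinear ℝ {A, B, D} :=
    not_collinear_of_mem_line hB.right_mem_affineSpan (by rwa [Set.pair_comm] at hADC)
  have hCN : C ≠ N := by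
    rintro rfl
    rcases hN with hC | hCO
    · have hCAO := collinear_insert_of_mem_affineSpan_pair hC.wbtw.mem_affineSpan
      exact hACO (by rwa [Set.insert_comm] at hCAO)
    · exact hO.left_ne hCO
  have hAD : A ≠ D := ne₁₂_of_not_collinear hADC
  have hD' : D₁' = D₂' := eq_of_mem_line_of_mem_line hADC
    (h₁col₃.mem_affineSpan_of_mem_of_ne (by simp) (by simp) (by simp) hAD)
    (h₂col₃.mem_affineSpan_of_mem_of_ne (by simp) (by simp) (by simp) hAD)
    (h₁col₁.mem_affineSpan_of_mem_of_ne (by simp) (by simp) (by simp) hCN)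
    (h₂col₁.mem_affineSpan_of_mem_of_ne (by simp) (by simp) (by simp) hCN)
  subst hD'
  have hBD' : B ≠ D₁' := by
    rintro rfl
    exact hABD (by rwa [Set.pair_comm] at h₁col₃)
  exact eq_of_mem_line_of_mem_line (by rwa [Set.pair_comm] at hncol)
    h₁btw₁.wbtw.mem_affineSpan h₂btw₁.wbtw.mem_affineSpan
    (h₁col₂.mem_affineSpan_of_mem_of_ne (by simp) (by simp) (by simp) hBD')
    (h₂col₂.mem_affineSpan_of_mem_of_ne (by simp) (by simp) (by simp) hBD')

/-- Uniqueness of the geometric successor: any two points `S₁`, `S₂` witnessing the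
successor construction for the same diagram `A B C D O N` coincide. -/
theorem successor_unique {V : Type*} [AddCommGroup V] [Module ℝ V]
    (A B C D O N : V)
    (hncol : ¬ Collinear ℝ ({A, B, O} : Set V))
    (hB : Sbtw ℝ A B C) (hO : Sbtw ℝ C O D)
    (hN : Sbtw ℝ A N O ∨ N = O)
    (S₁ S₂ D₁' D₂' : V)
    (h₁col₁ : Collinear ℝ ({C, D₁', N} : Set V))
    (h₁col₂ : Collinear ℝ ({B, D₁', S₁} : Set V))
    (h₁col₃ : Collinear ℝ ({A, D, D₁'} : Set V))
    (h₁btw₁ : Sbtw ℝ A S₁ O) (h₁btw₂ : Sbtw ℝ A S₁ N)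
    (h₂col₁ : Collinear ℝ ({C, D₂', N} : Set V))
    (h₂col₂ : Collinear ℝ ({B, D₂', S₂} : Set V))
    (h₂col₃ : Collinear ℝ ({A, D, D₂'} : Set V))
    (h₂btw₁ : Sbtw ℝ A S₂ O) (h₂btw₂ : Sbtw ℝ A S₂ N) :
    S₁ = S₂ :=
  successor_unique_general A B C D O N hncol hB hO hN S₁ S₂ D₁' D₂' h₁col₁ h₁col₂ h₁col₃ h₁btw₁
    h₂col₁ h₂col₂ h₂col₃ h₂btw₁
end
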